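/- Let 𝒫' refine 𝒫 and let coarse and fine finite DTMDPs over 𝒫 and 𝒫' with reward structures satisfy the refinement correspondence, with common uniformisation rate q > 0 and time bound t ≥ 0. Then for all blocks z ∈ 𝒫, z' ∈ 𝒫' with z' ⊆ z, the maximal values satisfy sup_{σ ∈ HR} V_c(σ, z) ≥ sup_{σ' ∈ HR} V_f(σ', z'), where V_c and V_f are the scheduler values of the coarse and fine DTMDPs with their respective rewards; i.e., refining the partition cannot worsen the upper bound. -/

import Mathlib

open scoped BigOperators

namespace TR

variable {S A : Type} [Fintype S] [Fintype A] [DecidableEq S] [DecidableEq A]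

/-- Poisson probabilities `φ_λ(i) = λ^i/i! · e^{−λ}`. -/
noncomputable def phi (lam : ℝ) (i : ℕ) : ℝ :=
  lam ^ i / (Nat.factorial i : ℝ) * Real.exp (-lam)

/-- `ψ_λ(i) = 1 − Σ_{j=0}^{i} φ_λ(j)`. -/
noncomputable def psi (lam : ℝ) (i : ℕ) : ℝ :=
  1 - ∑ j ∈ Finset.range (i + 1), phi lam j

/-- Action `a` is enabled in state `s`. -/
def Enabled (P : S → A → S → ℝ) (s : S) (a : A) : Prop :=
  ∑ s', P s a s' = 1

/-- `P` is the transition function of a finite DTMDP. -/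
def IsDTMDP (P : S → A → S → ℝ) : Prop :=
  (∀ s a s', 0 ≤ P s a s') ∧
  (∀ s a, (∑ s', P s a s') = 0 ∨ (∑ s', P s a s') = 1) ∧
  (∀ s, ∃ a, Enabled P s a)

/-- History-dependent randomised scheduler.  A history is encoded as a pair of
a list of (state, action) pairs (most recent first) and the current state. -/
def IsHR (P : S → A → S → ℝ) (sch : List (S × A) × S → A → ℝ) : Prop :=
  (∀ h a, 0 ≤ sch h a) ∧ (∀ h, ∑ a, sch h a = 1) ∧
  (∀ h a, 0 < sch h a → Enabled P h.2 a)

/-- Probability of the path recorded in the given history (of length `n`,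
starting at `s0`) under the HR scheduler `sch`. -/
noncomputable def hrHistProb (P : S → A → S → ℝ) (sch : List (S × A) × S → A → ℝ)
    (s0 : S) : ℕ → List (S × A) × S → ℝ
  | 0, h => if h.1 = [] ∧ h.2 = s0 then 1 else 0
  | _ + 1, ([], _) => 0
  | n + 1, ((s, a) :: rest, s') =>
      hrHistProb P sch s0 n (rest, s) * sch (rest, s) a * P s a s'

/-- Transient probability `tprob^σ(s0, n, s)`: total probability of all paths of
length `n` from `s0` ending in `s`. -/
noncomputable def hrProb (P : S → A → S → ℝ) (sch : List (S × A) × S → A → ℝ)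
    (s0 : S) (n : ℕ) (s : S) : ℝ :=
  ∑' l : List (S × A), hrHistProb P sch s0 n (l, s)

/-- Counting randomised scheduler. -/
def IsCR (P : S → A → S → ℝ) (sch : S → ℕ → A → ℝ) : Prop :=
  (∀ s n a, 0 ≤ sch s n a) ∧ (∀ s n, ∑ a, sch s n a = 1) ∧
  (∀ s n a, 0 < sch s n a → Enabled P s a)

/-- Transient distribution of a CR scheduler. -/
noncomputable def crProb (P : S → A → S → ℝ) (sch : S → ℕ → A → ℝ) (s0 : S) :
    ℕ → S → ℝ
  | 0 => fun s => if s = s0 then 1 else 0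
  | n + 1 => fun s' => ∑ s, crProb P sch s0 n s * ∑ a, sch s n a * P s a s'

/-- Counting deterministic scheduler. -/
def IsCD (P : S → A → S → ℝ) (d : S → ℕ → A) : Prop :=
  ∀ s n, Enabled P s (d s n)

/-- Transient distribution of a CD scheduler. -/
noncomputable def cdProb (P : S → A → S → ℝ) (d : S → ℕ → A) (s0 : S) :
    ℕ → S → ℝ
  | 0 => fun s => if s = s0 then 1 else 0
  | n + 1 => fun s' => ∑ s, cdProb P d s0 n s * P s (d s n) s'

/-- The value `V = Σ_i [ φ_{qt}(i)·Σ_s p_i(s)·f(s) + ψ_{qt}(i)·Σ_s p_i(s)·c(s)/q ]`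
of transient distributions `p` w.r.t. uniformisation rate `q`, time bound `t`
and rewards `(c, f)`. -/
noncomputable def value (q t : ℝ) (c f : S → ℝ) (p : ℕ → S → ℝ) : ℝ :=
  ∑' i : ℕ, (phi (q * t) i * ∑ s, p i s * f s
    + psi (q * t) i * ∑ s, p i s * (c s / q))

/-- Value-iteration vectors of a CR scheduler: `crVI … k j` is `q_{k+1-j}`,
i.e. `crVI … k 0 = q_{k+1} ≡ 0` and `crVI … k (k+1) = q_0`. -/
noncomputable def crVI (P : S → A → S → ℝ) (sch : S → ℕ → A → ℝ)
    (q t : ℝ) (c f : S → ℝ) (k : ℕ) : ℕ → S → ℝ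
  | 0 => fun _ => 0
  | j + 1 => fun s =>
      (∑ a, sch s (k - j) a * ∑ s', P s a s' * crVI P sch q t c f k j s')
      + phi (q * t) (k - j) * f s + psi (q * t) (k - j) * (c s / q)

/-- Maximising value-iteration vectors: `maxVI … k j` is `q'_{k+1-j}`,
i.e. `maxVI … k 0 = q'_{k+1} ≡ 0` and `maxVI … k (k+1) = q'_0`. -/
noncomputable def maxVI (P : S → A → S → ℝ)
    (q t : ℝ) (c f : S → ℝ) (k : ℕ) : ℕ → S → ℝ
  | 0 => fun _ => 0
  | j + 1 => fun s =>
      sSup {x : ℝ | ∃ a, Enabled P s a ∧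
        x = ∑ s', P s a s' * maxVI P q t c f k j s'}
      + phi (q * t) (k - j) * f s + psi (q * t) (k - j) * (c s / q)

/-- Maximum of a real-valued function on a finite nonempty type. -/
noncomputable def maxOf [Nonempty S] (g : S → ℝ) : ℝ :=
  Finset.univ.sup' Finset.univ_nonempty g

/-- `k` is `ε`-sufficient: `Σ_{n=0}^{k} ψ_{qt}(n) > qt − ε·q/(2·max_s c(s))`
(dropped if `max_s c(s) = 0`) and `ψ_{qt}(k)·max_s f(s) < ε/2`. -/
def EpsSufficient [Nonempty S] (q t : ℝ) (c f : S → ℝ) (ε : ℝ) (k : ℕ) : Prop :=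
  (maxOf c = 0 ∨
    (∑ n ∈ Finset.range (k + 1), psi (q * t) n) > q * t - ε * q / (2 * maxOf c)) ∧
  psi (q * t) k * maxOf f < ε / 2

/-- `n`-step transition probabilities (matrix powers) of a stochastic matrix. -/
noncomputable def matPow (P : S → S → ℝ) : ℕ → S → S → ℝ
  | 0 => fun s s' => if s = s' then 1 else 0
  | n + 1 => fun s s' => ∑ s'', matPow P n s s'' * P s'' s'

/-- `part` is a partition of the finite state set `S`. -/
def IsPartition (part : Finset (Finset S)) : Prop :=
  (∀ z ∈ part, z.Nonempty) ∧ (∀ s : S, ∃ z ∈ part, s ∈ z) ∧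
  (∀ z ∈ part, ∀ z' ∈ part, z ≠ z' → Disjoint z z')

/-- Abstraction DTMDP of a stochastic matrix w.r.t. a partition: states are
blocks, actions are concrete states, `P̄(z, s, z') = Σ_{s' ∈ z'} P(s,s')` if
`s ∈ z` and `0` otherwise. -/
noncomputable def abst (P : S → S → ℝ) (part : Finset (Finset S)) :
    {z // z ∈ part} → S → {z // z ∈ part} → ℝ :=
  fun z s z' => if s ∈ z.1 then ∑ s' ∈ z'.1, P s s' else 0

/-!
Every fine block lies in a unique coarse block, which gives a map `blk` from fine to coarse
states, and by the correspondence every enabled fine action at `s` has a coarse action at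
`blk s` whose successor law is the image under `blk` of the fine one (`IsLumping`). Given a
fine HR scheduler, the coarse scheduler plays, after a coarse history `H`, the conditional law
of the projected fine action given that the fine history projects to `H` (`projSch`). By
induction on the length, every coarse history then has the total probability of the fine
histories above it, so the coarse transient distributions are the images of the fine ones.
Since rewards can only grow from a fine block to the coarse block containing it, every fine
value is bounded by a coarse one.
-/

section Poisson

open scoped Nat

variable {lam : ℝ}

lemma hasSum_phi (lam : ℝ) : HasSum (phi lam) 1 := by
  have h := (NormedSpace.expSeries_div_hasSum_exp lam).mul_right (Real.exp (-lam))
  rwa [← Real.exp_eq_exp_ℝ, ← Real.exp_add, add_neg_cancel, Real.exp_zero] at h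

lemma phi_nonneg (hlam : 0 ≤ lam) (i : ℕ) : 0 ≤ phi lam i := by
  unfold phi; positivity

lemma psi_eq_tsum (lam : ℝ) (i : ℕ) : psi lam i = ∑' j, phi lam (j + (i + 1)) := by
  rw [psi, ← (hasSum_phi lam).tsum_eq, ← (hasSum_phi lam).summable.sum_add_tsum_nat_add (i + 1)]
  ring

lemma psi_nonneg (hlam : 0 ≤ lam) (i : ℕ) : 0 ≤ psi lam i := by
  rw [psi_eq_tsum]
  exact tsum_nonneg fun j => phi_nonneg hlam _

lemma phi_add_le (hlam : 0 ≤ lam) (j m : ℕ) :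
    phi lam (j + m) ≤ lam ^ m / m ! * phi lam j := by
  have hfac : ((m ! * j ! : ℕ) : ℝ) ≤ (j + m)! := by
    rw [add_comm]
    exact_mod_cast Nat.le_of_dvd (Nat.factorial_pos _)
      (Nat.factorial_mul_factorial_dvd_factorial_add m j)
  push_cast at hfac
  unfold phi
  rw [pow_add, ← mul_assoc, div_mul_div_comm, mul_comm (lam ^ j)]
  gcongr

lemma psi_le (hlam : 0 ≤ lam) (i : ℕ) : psi lam i ≤ lam ^ (i + 1) / (i + 1)! := by
  rw [psi_eq_tsum]
  calc ∑' j, phi lam (j + (i + 1)) ≤ ∑' j, lam ^ (i + 1) / (i + 1)! * phi lam j :=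
        Summable.tsum_le_tsum (phi_add_le hlam · (i + 1))
          ((summable_nat_add_iff (i + 1)).2 (hasSum_phi lam).summable)
          ((hasSum_phi lam).summable.mul_left _)
    _ = lam ^ (i + 1) / (i + 1)! := by rw [tsum_mul_left, (hasSum_phi lam).tsum_eq, mul_one]

lemma summable_psi (hlam : 0 ≤ lam) : Summable (psi lam) :=
  Summable.of_nonneg_of_le (psi_nonneg hlam) (psi_le hlam)
    ((summable_nat_add_iff 1).2 (Real.summable_pow_div_factorial lam))

end Poisson

def listsOfLen (α : Type) [Fintype α] [DecidableEq α] : ℕ → Finset (List α)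
  | 0 => {[]}
  | n + 1 => (Finset.univ ×ˢ listsOfLen α n).image fun p => p.1 :: p.2

section Lists

variable {α : Type} [Fintype α] [DecidableEq α]

lemma mem_listsOfLen {n : ℕ} {l : List α} : l ∈ listsOfLen α n ↔ l.length = n := by
  induction l generalizing n with
  | nil => cases n <;> simp [listsOfLen]
  | cons a l ih => cases n <;> simp [listsOfLen, ih]

lemma sum_listsOfLen_succ {M : Type} [AddCommMonoid M] (n : ℕ) (F : List α → M) :
    ∑ l ∈ listsOfLen α (n + 1), F l = ∑ a, ∑ l ∈ listsOfLen α n, F (a :: l) := by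
  rw [listsOfLen, ← Finset.sum_product' (f := fun a l => F (a :: l))]
  exact Finset.sum_image fun p _ q _ h => Prod.ext (List.cons.inj h).1 (List.cons.inj h).2

end Lists

lemma exists_isHR {S A : Type} [Fintype S] [Fintype A] {P : S → A → S → ℝ}
    (hP : IsDTMDP P) :
    ∃ sch : List (S × A) × S → A → ℝ, IsHR P sch := by
  classical
  choose d hd using hP.2.2
  refine ⟨fun h a => if a = d h.2 then 1 else 0, fun h a => by positivity, fun h => by simp,
    fun h a ha => ?_⟩
  obtain rfl : a = d h.2 := by by_contra hne; simp [hne] at ha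
  exact hd h.2

section Histories

variable {S A : Type} [DecidableEq S] {P : S → A → S → ℝ}
  {sch : List (S × A) × S → A → ℝ} {s0 : S}

@[simp]
lemma hrHistProb_zero (l : List (S × A)) (s : S) :
    hrHistProb P sch s0 0 (l, s) = if l = [] ∧ s = s0 then 1 else 0 := rfl

@[simp]
lemma hrHistProb_succ_nil (n : ℕ) (s : S) : hrHistProb P sch s0 (n + 1) ([], s) = 0 := rfl

@[simp]
lemma hrHistProb_succ_cons (n : ℕ) (s : S) (a : A) (l : List (S × A)) (s' : S) :
    hrHistProb P sch s0 (n + 1) ((s, a) :: l, s') =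
      hrHistProb P sch s0 n (l, s) * sch (l, s) a * P s a s' := rfl

lemma hrHistProb_nonneg (hP : ∀ s a s', 0 ≤ P s a s') (hsch : ∀ h a, 0 ≤ sch h a) (n : ℕ)
    (h : List (S × A) × S) : 0 ≤ hrHistProb P sch s0 n h := by
  induction n generalizing h with
  | zero => obtain ⟨l, s⟩ := h; simp only [hrHistProb_zero]; positivity
  | succ n ih =>
    obtain ⟨_ | ⟨⟨s, a⟩, l⟩, s'⟩ := h
    · simp
    · simpa using mul_nonneg (mul_nonneg (ih _) (hsch _ _)) (hP _ _ _)

lemma length_eq_of_hrHistProb_ne_zero {n : ℕ} {l : List (S × A)} {s : S}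
    (h : hrHistProb P sch s0 n (l, s) ≠ 0) : l.length = n := by
  induction n generalizing l s with
  | zero => by_contra hl; simp_all
  | succ n ih =>
    obtain _ | ⟨⟨s₁, a⟩, l⟩ := l
    · simp at h
    · simp only [hrHistProb_succ_cons, ne_eq, mul_eq_zero, not_or] at h
      simp [ih h.1.1]

variable [Fintype S] [Fintype A] [DecidableEq A]

lemma hrProb_eq_sum (n : ℕ) (s : S) :
    hrProb P sch s0 n s = ∑ l ∈ listsOfLen (S × A) n, hrHistProb P sch s0 n (l, s) :=
  tsum_eq_sum fun _ hl => by_contra fun h =>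
    hl (mem_listsOfLen.2 (length_eq_of_hrHistProb_ne_zero h))

lemma hrProb_zero (s : S) : hrProb P sch s0 0 s = if s = s0 then 1 else 0 := by
  simp only [hrProb_eq_sum, listsOfLen, Finset.sum_singleton, hrHistProb_zero, true_and]

lemma hrProb_succ (n : ℕ) (s' : S) :
    hrProb P sch s0 (n + 1) s' = ∑ l ∈ listsOfLen (S × A) n, ∑ s, ∑ a,
      hrHistProb P sch s0 n (l, s) * sch (l, s) a * P s a s' := by
  rw [hrProb_eq_sum, sum_listsOfLen_succ, Finset.sum_comm]
  simp_rw [Fintype.sum_prod_type]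
  rfl

lemma hrProb_nonneg (hP : ∀ s a s', 0 ≤ P s a s') (hsch : ∀ h a, 0 ≤ sch h a) (n : ℕ)
    (s : S) : 0 ≤ hrProb P sch s0 n s := by
  rw [hrProb_eq_sum]
  exact Finset.sum_nonneg fun l _ => hrHistProb_nonneg hP hsch n (l, s)

lemma sum_hrProb_le_one (hP : IsDTMDP P) (hsch : IsHR P sch) (n : ℕ) :
    ∑ s, hrProb P sch s0 n s ≤ 1 := by
  induction n with
  | zero => simp [hrProb_zero]
  | succ n ih =>
    have hout : ∀ s a, ∑ s', P s a s' ≤ 1 := fun s a => by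
      rcases hP.2.1 s a with h | h <;> rw [h]; exact zero_le_one
    calc ∑ s', hrProb P sch s0 (n + 1) s'
        = ∑ l ∈ listsOfLen (S × A) n, ∑ s, ∑ a,
            hrHistProb P sch s0 n (l, s) * sch (l, s) a * ∑ s', P s a s' := by
          simp_rw [hrProb_succ, Finset.mul_sum]
          exact Finset.sum_comm.trans (Finset.sum_congr rfl fun _ _ =>
            Finset.sum_comm.trans (Finset.sum_congr rfl fun _ _ => Finset.sum_comm))
      _ ≤ ∑ l ∈ listsOfLen (S × A) n, ∑ s, ∑ a,
            hrHistProb P sch s0 n (l, s) * sch (l, s) a := by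
          refine Finset.sum_le_sum fun l _ => Finset.sum_le_sum fun s _ =>
            Finset.sum_le_sum fun a _ => ?_
          exact mul_le_of_le_one_right
            (mul_nonneg (hrHistProb_nonneg hP.1 hsch.1 _ _) (hsch.1 _ _)) (hout s a)
      _ = ∑ s, hrProb P sch s0 n s := by
          simp_rw [← Finset.mul_sum, hsch.2.1, mul_one, hrProb_eq_sum]
          exact Finset.sum_comm
      _ ≤ 1 := ih

end Histories

section Lumping

variable {Sc Ac Sf Af : Type} [Fintype Sf] [DecidableEq Sc]

def IsLumping (Pc : Sc → Ac → Sc → ℝ) (Pf : Sf → Af → Sf → ℝ) (blk : Sf → Sc)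
    (act : Sf → Af → Ac) : Prop :=
  ∀ s af, Enabled Pf s af → ∀ Z, Pc (blk s) (act s af) Z = ∑ s' with blk s' = Z, Pf s af s'

variable {Pc : Sc → Ac → Sc → ℝ} {Pf : Sf → Af → Sf → ℝ} {blk : Sf → Sc}
  {act : Sf → Af → Ac}

lemma IsLumping.enabled [Fintype Sc] (h : IsLumping Pc Pf blk act) {s : Sf} {af : Af}
    (hen : Enabled Pf s af) : Enabled Pc (blk s) (act s af) := by
  unfold Enabled
  simp_rw [h s af hen]
  rw [Finset.sum_fiberwise]
  exact hen

lemma IsLumping.sch_mul_eq_sum {sf : List (Sf × Af) × Sf → Af → ℝ} [Fintype Af]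
    (h : IsLumping Pc Pf blk act) (hsf : IsHR Pf sf) (H : List (Sf × Af) × Sf) (af : Af)
    (Z : Sc) :
    sf H af * Pc (blk H.2) (act H.2 af) Z = ∑ s' with blk s' = Z, sf H af * Pf H.2 af s' := by
  rw [← Finset.mul_sum]
  rcases (hsf.1 H af).eq_or_lt with h0 | hpos
  · simp [← h0]
  · rw [h _ _ (hsf.2.2 _ _ hpos)]

end Lumping

section Projection

variable {Sc Ac Sf Af : Type} (blk : Sf → Sc) (act : Sf → Af → Ac)

def projHist (h : List (Sf × Af) × Sf) : List (Sc × Ac) × Sc :=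
  (h.1.map fun p => (blk p.1, act p.1 p.2), blk h.2)

lemma projHist_cons_eq_iff (s : Sf) (af : Af) (l : List (Sf × Af)) (s' : Sf) (Z₁ : Sc)
    (ac : Ac) (L : List (Sc × Ac)) (Z : Sc) :
    projHist blk act ((s, af) :: l, s') = ((Z₁, ac) :: L, Z) ↔
      projHist blk act (l, s) = (L, Z₁) ∧ act s af = ac ∧ blk s' = Z := by
  simp only [projHist, List.map_cons, Prod.mk.injEq, List.cons.injEq]
  tauto

variable [DecidableEq Sc] [DecidableEq Ac] [Fintype Sf] [DecidableEq Sf] [Fintype Af]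
  [DecidableEq Af] (Pf : Sf → Af → Sf → ℝ) (sf : List (Sf × Af) × Sf → Af → ℝ)
  (z0 : Sf)

noncomputable def projMass (n : ℕ) (H : List (Sc × Ac) × Sc) : ℝ :=
  ∑ h ∈ listsOfLen (Sf × Af) n ×ˢ Finset.univ with projHist blk act h = H,
    hrHistProb Pf sf z0 n h

noncomputable def projActMass (n : ℕ) (H : List (Sc × Ac) × Sc) (ac : Ac) : ℝ :=
  ∑ h ∈ listsOfLen (Sf × Af) n ×ˢ Finset.univ with projHist blk act h = H,
    hrHistProb Pf sf z0 n h * ∑ af with act h.2 af = ac, sf h af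

noncomputable def projSch (e : Sc → Ac) (H : List (Sc × Ac) × Sc) (ac : Ac) : ℝ :=
  if projMass blk act Pf sf z0 H.1.length H = 0 then if ac = e H.2 then 1 else 0
  else projActMass blk act Pf sf z0 H.1.length H ac / projMass blk act Pf sf z0 H.1.length H

variable {blk act Pf sf z0} {Pc : Sc → Ac → Sc → ℝ} {e : Sc → Ac}

lemma projMass_nonneg (hPf : ∀ s a s', 0 ≤ Pf s a s') (hsf : ∀ h a, 0 ≤ sf h a) (n : ℕ)
    (H : List (Sc × Ac) × Sc) : 0 ≤ projMass blk act Pf sf z0 n H :=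
  Finset.sum_nonneg fun _ _ => hrHistProb_nonneg hPf hsf _ _

lemma projActMass_nonneg (hPf : ∀ s a s', 0 ≤ Pf s a s') (hsf : ∀ h a, 0 ≤ sf h a) (n : ℕ)
    (H : List (Sc × Ac) × Sc) (ac : Ac) : 0 ≤ projActMass blk act Pf sf z0 n H ac :=
  Finset.sum_nonneg fun _ _ => mul_nonneg (hrHistProb_nonneg hPf hsf _ _)
    (Finset.sum_nonneg fun _ _ => hsf _ _)

lemma projMass_succ_cons (n : ℕ) (Z₁ : Sc) (ac : Ac) (L : List (Sc × Ac)) (Z : Sc) :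
    projMass blk act Pf sf z0 (n + 1) ((Z₁, ac) :: L, Z) =
      ∑ h ∈ listsOfLen (Sf × Af) n ×ˢ Finset.univ with projHist blk act h = (L, Z₁),
        ∑ af with act h.2 af = ac, ∑ s' with blk s' = Z,
          hrHistProb Pf sf z0 n h * sf h af * Pf h.2 af s' := by
  simp only [projMass, Finset.sum_filter, Finset.sum_product, sum_listsOfLen_succ,
    Fintype.sum_prod_type, projHist_cons_eq_iff, ite_and, hrHistProb_succ_cons]
  conv_lhs => enter [2, s]; rw [Finset.sum_comm]
  rw [Finset.sum_comm]
  simp only [Finset.sum_ite_irrel, Finset.sum_const_zero]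

variable [Fintype Ac]

lemma sum_projActMass (hsf : ∀ h, ∑ a, sf h a = 1) (n : ℕ) (H : List (Sc × Ac) × Sc) :
    ∑ ac, projActMass blk act Pf sf z0 n H ac = projMass blk act Pf sf z0 n H := by
  unfold projActMass projMass
  rw [Finset.sum_comm]
  refine Finset.sum_congr rfl fun h _ => ?_
  rw [← Finset.mul_sum, Finset.sum_fiberwise, hsf, mul_one]

lemma projMass_mul_projSch (hPf : ∀ s a s', 0 ≤ Pf s a s') (hsf : IsHR Pf sf)
    (L : List (Sc × Ac)) (Z : Sc) (ac : Ac) :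
    projMass blk act Pf sf z0 L.length (L, Z) * projSch blk act Pf sf z0 e (L, Z) ac =
      projActMass blk act Pf sf z0 L.length (L, Z) ac := by
  unfold projSch
  by_cases h0 : projMass blk act Pf sf z0 L.length (L, Z) = 0
  · rw [h0, zero_mul, eq_comm]
    have hsum := (sum_projActMass hsf.2.1 L.length (L, Z)).trans h0
    exact (Finset.sum_eq_zero_iff_of_nonneg fun ac _ =>
      projActMass_nonneg hPf hsf.1 _ _ ac).1 hsum ac (Finset.mem_univ _)
  · rw [if_neg h0, mul_div_cancel₀ _ h0]

lemma projMass_succ_cons_eq_mul (hPf : ∀ s a s', 0 ≤ Pf s a s') (hsf : IsHR Pf sf)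
    (hlump : IsLumping Pc Pf blk act) (Z₁ : Sc) (ac : Ac) (L : List (Sc × Ac)) (Z : Sc) :
    projMass blk act Pf sf z0 (L.length + 1) ((Z₁, ac) :: L, Z) =
      projMass blk act Pf sf z0 L.length (L, Z₁) * projSch blk act Pf sf z0 e (L, Z₁) ac *
        Pc Z₁ ac Z := by
  rw [projMass_mul_projSch hPf hsf, projMass_succ_cons, projActMass, Finset.sum_mul]
  refine Finset.sum_congr rfl fun h hh => ?_
  have hZ₁ : blk h.2 = Z₁ := (Prod.ext_iff.1 (Finset.mem_filter.1 hh).2).2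
  rw [Finset.mul_sum, Finset.sum_mul]
  refine Finset.sum_congr rfl fun af haf => ?_
  rw [← (Finset.mem_filter.1 haf).2, ← hZ₁, mul_assoc, hlump.sch_mul_eq_sum hsf,
    Finset.mul_sum]
  simp only [mul_assoc]

lemma hrHistProb_projSch (hPf : ∀ s a s', 0 ≤ Pf s a s') (hsf : IsHR Pf sf)
    (hlump : IsLumping Pc Pf blk act) (L : List (Sc × Ac)) (Z : Sc) :
    hrHistProb Pc (projSch blk act Pf sf z0 e) (blk z0) L.length (L, Z) =
      projMass blk act Pf sf z0 L.length (L, Z) := by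
  induction L generalizing Z with
  | nil =>
    rw [projMass, Finset.sum_filter, Finset.sum_product, List.length_nil, listsOfLen,
      Finset.sum_singleton]
    simp only [projHist, List.map_nil, hrHistProb_zero, Prod.mk.injEq, true_and]
    rw [Fintype.sum_eq_single z0 fun s hs => by simp [hs]]
    exact if_congr eq_comm (if_pos rfl).symm rfl
  | cons p L ih =>
    obtain ⟨Z₁, ac⟩ := p
    rw [List.length_cons, hrHistProb_succ_cons, ih, projMass_succ_cons_eq_mul hPf hsf hlump]

variable [Fintype Sc]

lemma isHR_projSch (hPf : ∀ s a s', 0 ≤ Pf s a s') (hsf : IsHR Pf sf)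
    (hlump : IsLumping Pc Pf blk act) (he : ∀ Z, Enabled Pc Z (e Z)) :
    IsHR Pc (projSch blk act Pf sf z0 e) := by
  refine ⟨fun H ac => ?_, fun H => ?_, fun H ac hpos => ?_⟩
  · unfold projSch
    split_ifs
    all_goals first
      | positivity
      | exact div_nonneg (projActMass_nonneg hPf hsf.1 _ _ _) (projMass_nonneg hPf hsf.1 _ _)
  · unfold projSch
    split_ifs with h0
    · simp
    · rw [← Finset.sum_div, sum_projActMass hsf.2.1, div_self h0]
  · unfold projSch at hpos
    split_ifs at hpos with h0 hac
    · exact hac ▸ he H.2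
    · exact absurd hpos (lt_irrefl 0)
    · have hN : projActMass blk act Pf sf z0 H.1.length H ac ≠ 0 := fun h => by
        simp [h] at hpos
      obtain ⟨h, hh, hne⟩ := Finset.exists_ne_zero_of_sum_ne_zero hN
      obtain ⟨af, haf, hsf0⟩ := Finset.exists_ne_zero_of_sum_ne_zero (right_ne_zero_of_mul hne)
      rw [Finset.mem_filter] at hh haf
      rw [← haf.2, ← (Prod.ext_iff.1 hh.2).2]
      exact hlump.enabled (hsf.2.2 _ _ ((hsf.1 _ _).lt_of_ne' hsf0))

lemma hrProb_projSch (hPf : ∀ s a s', 0 ≤ Pf s a s') (hsf : IsHR Pf sf)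
    (hlump : IsLumping Pc Pf blk act) (n : ℕ) (Z : Sc) :
    hrProb Pc (projSch blk act Pf sf z0 e) (blk z0) n Z =
      ∑ s with blk s = Z, hrProb Pf sf z0 n s := by
  have hfiber : ∀ L, projMass blk act Pf sf z0 n (L, Z) =
      ∑ h ∈ listsOfLen (Sf × Af) n ×ˢ Finset.univ.filter (blk · = Z) with
        (projHist blk act h).1 = L, hrHistProb Pf sf z0 n h := by
    intro L
    rw [projMass, ← Finset.filter_product_right, Finset.filter_filter]
    refine Finset.sum_congr (Finset.filter_congr fun h _ => ?_) fun _ _ => rfl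
    rw [Prod.ext_iff, and_comm]
    rfl
  calc hrProb Pc (projSch blk act Pf sf z0 e) (blk z0) n Z
      = ∑ L ∈ listsOfLen (Sc × Ac) n, projMass blk act Pf sf z0 n (L, Z) := by
        rw [hrProb_eq_sum]
        refine Finset.sum_congr rfl fun L hL => ?_
        rw [← mem_listsOfLen.1 hL, hrHistProb_projSch hPf hsf hlump]
    _ = ∑ h ∈ listsOfLen (Sf × Af) n ×ˢ Finset.univ.filter (blk · = Z),
          hrHistProb Pf sf z0 n h := by
        simp only [hfiber]
        refine Finset.sum_fiberwise_of_maps_to (fun h hh => ?_) _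
        rw [mem_listsOfLen, projHist, List.length_map]
        exact mem_listsOfLen.1 (Finset.mem_product.1 hh).1
    _ = ∑ s with blk s = Z, hrProb Pf sf z0 n s := by
        rw [Finset.sum_product_right]
        simp only [hrProb_eq_sum]

end Projection

theorem exists_isHR_hrProb_eq_sum {Sc Ac Sf Af : Type} [Fintype Sc] [DecidableEq Sc]
    [Fintype Ac] [DecidableEq Ac] [Fintype Sf] [DecidableEq Sf] [Fintype Af] [DecidableEq Af]
    {Pc : Sc → Ac → Sc → ℝ} {Pf : Sf → Af → Sf → ℝ} (blk : Sf → Sc)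
    (hPc : ∀ Z, ∃ ac, Enabled Pc Z ac) (hPf : ∀ s a s', 0 ≤ Pf s a s')
    (hcorr : ∀ s af, Enabled Pf s af →
      ∃ ac, ∀ Z, Pc (blk s) ac Z = ∑ s' with blk s' = Z, Pf s af s')
    {sf : List (Sf × Af) × Sf → Af → ℝ} (hsf : IsHR Pf sf) (z0 : Sf) :
    ∃ sc, IsHR Pc sc ∧
      ∀ n Z, hrProb Pc sc (blk z0) n Z = ∑ s with blk s = Z, hrProb Pf sf z0 n s := by
  choose e he using hPc
  have hact : ∀ s af, ∃ ac, Enabled Pf s af →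
      ∀ Z, Pc (blk s) ac Z = ∑ s' with blk s' = Z, Pf s af s' := fun s af => by
    by_cases h : Enabled Pf s af
    · exact (hcorr s af h).imp fun _ h' _ => h'
    · exact ⟨e (blk s), fun h' => absurd h' h⟩
  choose act hlump using hact
  exact ⟨projSch blk act Pf sf z0 e, isHR_projSch hPf hsf hlump he,
    hrProb_projSch hPf hsf hlump⟩

lemma sum_mul_le_sum_mul_of_eq_sum {S T : Type} [Fintype S] [Fintype T] [DecidableEq T]
    (blk : S → T) {p g : S → ℝ} {P G : T → ℝ} (hp : ∀ s, 0 ≤ p s)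
    (hg : ∀ s, g s ≤ G (blk s))
    (hP : ∀ Z, P Z = ∑ s with blk s = Z, p s) :
    ∑ s, p s * g s ≤ ∑ Z, P Z * G Z :=
  calc ∑ s, p s * g s ≤ ∑ s, p s * G (blk s) :=
        Finset.sum_le_sum fun s _ => mul_le_mul_of_nonneg_left (hg s) (hp s)
    _ = ∑ Z, P Z * G Z := by
        rw [← Finset.sum_fiberwise Finset.univ blk]
        refine Finset.sum_congr rfl fun Z _ => ?_
        rw [hP, Finset.sum_mul]
        exact Finset.sum_congr rfl fun s hs => by rw [(Finset.mem_filter.1 hs).2]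

section Value

variable {S : Type} [Fintype S] {q t : ℝ} {c f : S → ℝ} {p : ℕ → S → ℝ}

lemma value_term_le (hq : 0 < q) (ht : 0 ≤ t) (hc : ∀ s, 0 ≤ c s) (hf : ∀ s, 0 ≤ f s)
    (hp0 : ∀ n s, 0 ≤ p n s) (hp1 : ∀ n, ∑ s, p n s ≤ 1) (i : ℕ) :
    phi (q * t) i * ∑ s, p i s * f s + psi (q * t) i * ∑ s, p i s * (c s / q) ≤
      phi (q * t) i * ∑ s, f s + psi (q * t) i * ∑ s, c s / q := by
  have hlam : 0 ≤ q * t := mul_nonneg hq.le ht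
  have hp : ∀ s, p i s ≤ 1 := fun s =>
    (Finset.single_le_sum (fun s _ => hp0 i s) (Finset.mem_univ s)).trans (hp1 i)
  gcongr with s _ s _
  · exact phi_nonneg hlam i
  · exact mul_le_of_le_one_left (hf s) (hp s)
  · exact psi_nonneg hlam i
  · exact mul_le_of_le_one_left (div_nonneg (hc s) hq.le) (hp s)

lemma summable_value_terms (hq : 0 < q) (ht : 0 ≤ t) (hc : ∀ s, 0 ≤ c s)
    (hf : ∀ s, 0 ≤ f s) (hp0 : ∀ n s, 0 ≤ p n s) (hp1 : ∀ n, ∑ s, p n s ≤ 1) :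
    Summable fun i =>
      phi (q * t) i * ∑ s, p i s * f s + psi (q * t) i * ∑ s, p i s * (c s / q) := by
  have hlam : 0 ≤ q * t := mul_nonneg hq.le ht
  refine Summable.of_nonneg_of_le (fun i => ?_) (value_term_le hq ht hc hf hp0 hp1)
    (((hasSum_phi _).summable.mul_right _).add ((summable_psi hlam).mul_right _))
  exact add_nonneg
    (mul_nonneg (phi_nonneg hlam i) (Finset.sum_nonneg fun s _ => mul_nonneg (hp0 i s) (hf s)))
    (mul_nonneg (psi_nonneg hlam i)
      (Finset.sum_nonneg fun s _ => mul_nonneg (hp0 i s) (div_nonneg (hc s) hq.le)))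

lemma value_le_tsum (hq : 0 < q) (ht : 0 ≤ t) (hc : ∀ s, 0 ≤ c s) (hf : ∀ s, 0 ≤ f s)
    (hp0 : ∀ n s, 0 ≤ p n s) (hp1 : ∀ n, ∑ s, p n s ≤ 1) :
    value q t c f p ≤ ∑' i, (phi (q * t) i * ∑ s, f s + psi (q * t) i * ∑ s, c s / q) :=
  Summable.tsum_le_tsum (value_term_le hq ht hc hf hp0 hp1)
    (summable_value_terms hq ht hc hf hp0 hp1)
    (((hasSum_phi _).summable.mul_right _).add
      ((summable_psi (mul_nonneg hq.le ht)).mul_right _))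

end Value

lemma value_le_value_of_eq_sum {Sc Sf : Type} [Fintype Sc] [DecidableEq Sc] [Fintype Sf]
    (blk : Sf → Sc) {q t : ℝ} (hq : 0 < q) (ht : 0 ≤ t)
    {cc fc : Sc → ℝ} {cf ff : Sf → ℝ} (hcc : ∀ Z, 0 ≤ cc Z) (hfc : ∀ Z, 0 ≤ fc Z)
    (hcf : ∀ s, 0 ≤ cf s) (hff : ∀ s, 0 ≤ ff s)
    (hc : ∀ s, cf s ≤ cc (blk s)) (hf : ∀ s, ff s ≤ fc (blk s))
    {pc : ℕ → Sc → ℝ} {pf : ℕ → Sf → ℝ} (hpf0 : ∀ n s, 0 ≤ pf n s)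
    (hpf1 : ∀ n, ∑ s, pf n s ≤ 1)
    (hpc : ∀ n Z, pc n Z = ∑ s with blk s = Z, pf n s) :
    value q t cf ff pf ≤ value q t cc fc pc := by
  have hlam : 0 ≤ q * t := mul_nonneg hq.le ht
  have hpc0 : ∀ n Z, 0 ≤ pc n Z := fun n Z => by
    rw [hpc]; exact Finset.sum_nonneg fun s _ => hpf0 n s
  have hpc1 : ∀ n, ∑ Z, pc n Z ≤ 1 := fun n => by
    simp_rw [hpc]; rw [Finset.sum_fiberwise]; exact hpf1 n
  refine Summable.tsum_le_tsum (fun i => add_le_add ?_ ?_)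
    (summable_value_terms hq ht hcf hff hpf0 hpf1) (summable_value_terms hq ht hcc hfc hpc0 hpc1)
  · exact mul_le_mul_of_nonneg_left (sum_mul_le_sum_mul_of_eq_sum blk (hpf0 i) hf (hpc i))
      (phi_nonneg hlam i)
  · exact mul_le_mul_of_nonneg_left (sum_mul_le_sum_mul_of_eq_sum blk (hpf0 i)
      (fun s => div_le_div_of_nonneg_right (hc s) hq.le) (hpc i)) (psi_nonneg hlam i)

lemma bddAbove_range_value {S A : Type} [Fintype S] [DecidableEq S] [Fintype A] [DecidableEq A]
    {P : S → A → S → ℝ} (hP : IsDTMDP P) {q t : ℝ} (hq : 0 < q) (ht : 0 ≤ t)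
    {c f : S → ℝ} (hc : ∀ s, 0 ≤ c s) (hf : ∀ s, 0 ≤ f s) (s0 : S) :
    BddAbove (Set.range fun sch : {sch // IsHR P sch} => value q t c f (hrProb P sch.1 s0)) :=
  ⟨_, Set.forall_mem_range.2 fun sch => value_le_tsum hq ht hc hf
    (hrProb_nonneg hP.1 sch.2.1) (sum_hrProb_le_one hP sch.2)⟩

lemma IsPartition.eq_of_mem {S : Type} {part : Finset (Finset S)} (hp : IsPartition part)
    {z z' : Finset S} (hz : z ∈ part) (hz' : z' ∈ part) {s : S} (hs : s ∈ z)
    (hs' : s ∈ z') : z = z' :=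
  by_contra fun h => Finset.disjoint_left.1 (hp.2.2 z hz z' hz' h) hs hs'

lemma IsPartition.exists_map_eq_iff_subset {S : Type} {partc partf : Finset (Finset S)}
    (hpc : IsPartition partc) (hne : ∀ z' ∈ partf, z'.Nonempty)
    (href : ∀ z' ∈ partf, ∃ z ∈ partc, z' ⊆ z) :
    ∃ blk : {z // z ∈ partf} → {z // z ∈ partc}, ∀ z' z, blk z' = z ↔ z'.1 ⊆ z.1 := by
  choose blk hblk using fun z' : {z // z ∈ partf} => href z'.1 z'.2
  refine ⟨fun z' => ⟨blk z', (hblk z').1⟩, fun z' z => ⟨fun h => h ▸ (hblk z').2, fun h => ?_⟩⟩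
  obtain ⟨s, hs⟩ := hne z'.1 z'.2
  exact Subtype.ext (hpc.eq_of_mem (hblk z').1 z.2 ((hblk z').2 hs) (h hs))

/-- under the refinement correspondence, refining the partition
cannot worsen the upper bound: the fine maximal value is at most the coarse one. -/
theorem stmt4 {S Ac Af : Type} [Fintype S] [DecidableEq S]
    [Fintype Ac] [DecidableEq Ac] [Fintype Af] [DecidableEq Af]
    (partc partf : Finset (Finset S))
    (hpc : IsPartition partc) (hpf : IsPartition partf)
    (href : ∀ z' ∈ partf, ∃ z ∈ partc, z' ⊆ z)
    (Pc : {z // z ∈ partc} → Ac → {z // z ∈ partc} → ℝ) (hPc : IsDTMDP Pc)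
    (Pf : {z // z ∈ partf} → Af → {z // z ∈ partf} → ℝ) (hPf : IsDTMDP Pf)
    (cc fc : {z // z ∈ partc} → ℝ) (cf' ff : {z // z ∈ partf} → ℝ)
    (hcc : ∀ z, 0 ≤ cc z) (hfc : ∀ z, 0 ≤ fc z)
    (hcf : ∀ z, 0 ≤ cf' z) (hff : ∀ z, 0 ≤ ff z)
    (hrew : ∀ (z : {z // z ∈ partc}) (z' : {z // z ∈ partf}), z'.1 ⊆ z.1 →
      cf' z' ≤ cc z ∧ ff z' ≤ fc z)
    (hcorr : ∀ (z : {z // z ∈ partc}) (z' : {z // z ∈ partf}), z'.1 ⊆ z.1 →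
      ∀ af, Enabled Pf z' af → ∃ ac, Enabled Pc z ac ∧
        ∀ Z : {z // z ∈ partc},
          Pc z ac Z =
            ∑ Z' ∈ Finset.univ.filter (fun Z' : {z // z ∈ partf} => Z'.1 ⊆ Z.1),
              Pf z' af Z')
    (q t : ℝ) (hq : 0 < q) (ht : 0 ≤ t) :
    ∀ (z : {z // z ∈ partc}) (z' : {z // z ∈ partf}), z'.1 ⊆ z.1 →
      (⨆ sch' : {sch : List ({z // z ∈ partf} × Af) × {z // z ∈ partf} → Af → ℝ //
          IsHR Pf sch},
        value q t cf' ff (hrProb Pf sch'.1 z')) ≤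
      ⨆ sch : {sch : List ({z // z ∈ partc} × Ac) × {z // z ∈ partc} → Ac → ℝ //
          IsHR Pc sch},
        value q t cc fc (hrProb Pc sch.1 z) := by
  intro z z' hzz'
  obtain ⟨blk, hblk⟩ := hpc.exists_map_eq_iff_subset hpf.1 href
  have hcorr' : ∀ zf af, Enabled Pf zf af →
      ∃ ac, ∀ Z, Pc (blk zf) ac Z = ∑ zf' with blk zf' = Z, Pf zf af zf' := fun zf af h => by
    obtain ⟨ac, -, hP⟩ := hcorr (blk zf) zf ((hblk zf _).1 rfl) af h
    exact ⟨ac, fun Z => (hP Z).trans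
      (Finset.sum_congr (Finset.filter_congr fun zf' _ => (hblk zf' Z).symm) fun _ _ => rfl)⟩
  obtain ⟨sf₀, hsf₀⟩ := exists_isHR hPf
  have : Nonempty {sch // IsHR Pf sch} := ⟨⟨sf₀, hsf₀⟩⟩
  rw [← (hblk z' z).2 hzz']
  refine ciSup_mono_of_forall_exists (bddAbove_range_value hPc hq ht hcc hfc _) fun sf => ?_
  obtain ⟨sc, hsc, hprob⟩ := exists_isHR_hrProb_eq_sum blk hPc.2.2 hPf.1 hcorr' sf.2 z'
  exact ⟨⟨sc, hsc⟩, value_le_value_of_eq_sum blk hq ht hcc hfc hcf hff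
    (fun s => (hrew _ s ((hblk s _).1 rfl)).1) (fun s => (hrew _ s ((hblk s _).1 rfl)).2)
    (hrProb_nonneg hPf.1 sf.2.1) (sum_hrProb_le_one hPf sf.2) hprob⟩

end TR
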